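/- arXiv:2406.00580 — 2 statements merged into one kernel-verified Lean document; each statement's English description precedes it below -/
import Mathlib

section
/- If s(θ) = (a₀/2)θ² + O(θ) as θ → ∞ with a₀ > 0 and s is increasing and unbounded, then the inverse function θ(s) satisfies θ(s) = √(2s/a₀) + O(1) as s → ∞. -/
open Real Filter Asymptotics

/-- If `s θ = (a₀/2) θ² + O(θ)` as `θ → ∞`, with `a₀ > 0` and `s` strictly
increasing, continuous and unbounded on `(θ₀, ∞)`, then the inverse function
`θ(·)` satisfies `θ(t) = √(2t/a₀) + O(1)` as `t → ∞`. -/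
theorem inverse_arclength_asymptotics (a₀ θ₀ : ℝ) (ha₀ : 0 < a₀)
    (s θinv : ℝ → ℝ)
    (hmono : StrictMonoOn s (Set.Ioi θ₀))
    (hcont : ContinuousOn s (Set.Ioi θ₀))
    (hunb : Tendsto s atTop atTop)
    (hasym : (fun θ : ℝ => s θ - (a₀ / 2) * θ ^ 2) =O[atTop] (fun θ : ℝ => θ))
    (hinv_left : ∀ x ∈ Set.Ioi θ₀, θinv (s x) = x)
    (hinv_right : ∀ᶠ t in atTop, θinv t ∈ Set.Ioi θ₀ ∧ s (θinv t) = t) :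
    (fun t : ℝ => θinv t - Real.sqrt (2 * t / a₀)) =O[atTop]
      (fun _ : ℝ => (1 : ℝ)) := by
  -- θinv tends to atTop
  have htend : Tendsto θinv atTop atTop := by
    rw [tendsto_atTop]
    intro b
    set x0 : ℝ := max b (θ₀ + 1) with hx0
    have hx0mem : x0 ∈ Set.Ioi θ₀ := by
      simp only [Set.mem_Ioi, hx0]
      have : θ₀ < θ₀ + 1 := by linarith
      exact lt_of_lt_of_le this (le_max_right _ _)
    filter_upwards [hinv_right, eventually_ge_atTop (s x0 + 1)] with t ht hts
    by_contra h
    push_neg at h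
    have hle : θinv t ≤ x0 := le_trans h.le (le_max_left _ _)
    have := hmono.monotoneOn ht.1 hx0mem hle
    rw [ht.2] at this
    linarith
  obtain ⟨C, hCpos, hC⟩ := hasym.exists_pos
  rw [isBigOWith_iff] at hC
  obtain ⟨N, hN⟩ := hC.exists_forall_of_atTop
  rw [isBigO_iff]
  refine ⟨2 * C / a₀, ?_⟩
  filter_upwards [hinv_right, eventually_ge_atTop (0 : ℝ),
    htend.eventually (eventually_ge_atTop (max N 1))] with t ht ht0 hx
  set x := θinv t with hxdef
  have hx1 : (1 : ℝ) ≤ x := le_trans (le_max_right _ _) hx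
  have hxN : N ≤ x := le_trans (le_max_left _ _) hx
  have hbound : |t - a₀ / 2 * x ^ 2| ≤ C * x := by
    have := hN x hxN
    rw [ht.2] at this
    simpa [Real.norm_eq_abs, abs_of_pos (lt_of_lt_of_le one_pos hx1)] using this
  set r := Real.sqrt (2 * t / a₀) with hrdef
  have hr0 : 0 ≤ r := Real.sqrt_nonneg _
  have hr2 : r ^ 2 = 2 * t / a₀ := by
    rw [hrdef, sq_sqrt]
    positivity
  have hsum : (1 : ℝ) ≤ x + r := by linarith
  have hkey : |x - r| * (x + r) ≤ (2 * C / a₀) * (x + r) := by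
    have h1 : |x - r| * (x + r) = |x ^ 2 - r ^ 2| := by
      rw [← abs_of_nonneg (by linarith : (0:ℝ) ≤ x + r), ← abs_mul]
      ring_nf
    rw [h1, hr2]
    have h2 : |x ^ 2 - 2 * t / a₀| = (2 / a₀) * |t - a₀ / 2 * x ^ 2| := by
      rw [abs_sub_comm, ← abs_of_pos (by positivity : (0:ℝ) < 2 / a₀), ← abs_mul]
      congr 1
      field_simp
    rw [h2]
    have h3 : (2 / a₀) * |t - a₀ / 2 * x ^ 2| ≤ (2 / a₀) * (C * x) := by
      apply mul_le_mul_of_nonneg_left hbound (by positivity)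
    calc (2 / a₀) * |t - a₀ / 2 * x ^ 2| ≤ (2 / a₀) * (C * x) := h3
      _ = (2 * C / a₀) * x := by ring
      _ ≤ (2 * C / a₀) * (x + r) := by
          apply mul_le_mul_of_nonneg_left (by linarith) (by positivity)
  have hfinal : |x - r| ≤ 2 * C / a₀ :=
    le_of_mul_le_mul_right (by linarith [hkey]) (by linarith : (0:ℝ) < x + r)
  simpa [Real.norm_eq_abs] using hfinal
end

section
/- With γ(θ) = (2+θ²)/(a₀(1+θ²)^{3/2}) and the arc-length derivatives dγ/ds = γ'(θ)/(a₀√(1+θ²)), d²γ/ds² = γ''(θ)/(a₀²(1+θ²)) − θγ'(θ)/(a₀²(1+θ²)²), and with d(s) bounded and d(s)γ(s) → 0, the potential W̃(s) = γ²/(4(1−γd)²) + d|d²γ/ds²|/(2(1−γd)³) + (5/4)d²|dγ/ds|²/(1−dγ)⁴ satisfies W̃(s(θ)) = 1/(4a₀²θ²) + O(θ^{-3}) as θ → ∞. -/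
/-!
Along the spiral, `γ` and its θ-derivatives are all `O(1/θ)`, and each arc-length derivative
gains a further factor `1/√(1 + θ²) = O(1/θ)`, so `dγ/ds = O(θ⁻²)` and `d²γ/ds² = O(θ⁻³)`.
Since `d` is bounded and `dγ → 0`, the denominators `1 - γd` tend to `1`; hence the three
correction terms of `W̃` beyond `γ²/4` are `O(θ⁻³)`. Finally
`γ² - 1/(a₀²θ²) = (θ⁴ + θ² - 1)/(a₀²θ²(1 + θ²)³) = O(θ⁻⁴)`.
-/

open Real Filter Asymptotics Topology

noncomputable def effectivePotential (γ d γ' γ'' : ℝ) : ℝ :=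
  γ ^ 2 / (4 * (1 - γ * d) ^ 2) + d * |γ''| / (2 * (1 - γ * d) ^ 3)
    + (5 / 4) * d ^ 2 * |γ'| ^ 2 / (1 - d * γ) ^ 4

theorem isBigO_effectivePotential_sub {α : Type*} {l : Filter α} {g d D₁ D₂ r : α → ℝ}
    (hg : g =O[l] r) (hd : d =O[l] fun _ => (1 : ℝ))
    (hdg : Tendsto (fun t => d t * g t) l (𝓝 0))
    (hD₁ : D₁ =O[l] fun t => r t ^ 2) (hD₂ : D₂ =O[l] fun t => r t ^ 3)
    (hr : r =O[l] fun _ => (1 : ℝ)) :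
    (fun t => effectivePotential (g t) (d t) (D₁ t) (D₂ t) - g t ^ 2 / 4)
      =O[l] fun t => r t ^ 3 := by
  have hgd : Tendsto (fun t => g t * d t) l (𝓝 0) := by simpa only [mul_comm] using hdg
  have hone_sub : Tendsto (fun t => 1 - g t * d t) l (𝓝 1) := by
    simpa using tendsto_const_nhds.sub hgd
  have hinv : (fun t => (1 - g t * d t)⁻¹) =O[l] fun _ => (1 : ℝ) :=
    (hone_sub.inv₀ one_ne_zero).isBigO_one ℝ
  have htwo_sub : (fun t => 2 - g t * d t) =O[l] fun _ => (1 : ℝ) :=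
    (tendsto_const_nhds.sub hgd).isBigO_one ℝ
  have hgd_isBigO : (fun t => g t * d t) =O[l] r := by simpa using hg.mul hd
  have hexpand : ∀ᶠ t in l, effectivePotential (g t) (d t) (D₁ t) (D₂ t) - g t ^ 2 / 4
      = 1 / 4 * (g t ^ 2 * (g t * d t) * (2 - g t * d t) * (1 - g t * d t)⁻¹ ^ 2)
        + 1 / 2 * (d t * |D₂ t| * (1 - g t * d t)⁻¹ ^ 3)
        + 5 / 4 * (d t ^ 2 * |D₁ t| ^ 2 * (1 - g t * d t)⁻¹ ^ 4) := by
    filter_upwards [hone_sub.eventually_ne one_ne_zero] with t ht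
    rw [effectivePotential, mul_comm (d t)]
    field_simp
    ring
  refine EventuallyEq.trans_isBigO hexpand (IsBigO.add (IsBigO.add ?_ ?_) ?_)
  · have := (((hg.pow 2).mul hgd_isBigO).mul htwo_sub).mul (hinv.pow 2)
    exact (this.const_mul_left _).congr_right fun t => by ring
  · have := (hd.mul hD₂.abs_left).mul (hinv.pow 3)
    exact (this.const_mul_left _).congr_right fun t => by ring
  · have hr4 : (fun t => r t ^ 4) =O[l] fun t => r t ^ 3 :=
      ((isBigO_refl (fun t => r t ^ 3) l).mul hr).congr (fun t => by ring) (fun t => by ring)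
    have := ((hd.pow 2).mul (hD₁.abs_left.pow 2)).mul (hinv.pow 4)
    exact ((this.congr_right fun t => by ring).trans hr4).const_mul_left _

theorem abs_le_one_add_sq (θ : ℝ) : |θ| ≤ 1 + θ ^ 2 := by
  nlinarith [sq_abs θ, sq_nonneg (|θ| - 1)]

theorem isBigO_div_one_add_sq : (fun θ : ℝ => θ / (1 + θ ^ 2)) =O[atTop] fun _ => (1 : ℝ) := by
  refine isBigO_of_le' (c := 1) _ fun θ => ?_
  rw [norm_div, norm_eq_abs, norm_eq_abs, abs_of_pos (by positivity : (0 : ℝ) < 1 + θ ^ 2),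
    norm_one, one_mul, div_le_one₀ (by positivity)]
  exact abs_le_one_add_sq θ

theorem isBigO_inv_mul_sqrt_one_add_sq (a : ℝ) :
    (fun θ : ℝ => (a * √(1 + θ ^ 2))⁻¹) =O[atTop] fun θ => θ⁻¹ := by
  refine IsBigO.of_bound |a|⁻¹ ?_
  filter_upwards [eventually_ne_atTop 0] with θ hθ
  have hθs : |θ| ≤ √(1 + θ ^ 2) := abs_le_sqrt (by linarith)
  simp only [norm_inv, norm_mul, norm_eq_abs, abs_of_nonneg (sqrt_nonneg _), mul_inv]
  gcongr

theorem isBigO_inv_mul_one_add_sq (a : ℝ) :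
    (fun θ : ℝ => (a ^ 2 * (1 + θ ^ 2))⁻¹) =O[atTop] fun θ => θ⁻¹ ^ 2 := by
  refine ((isBigO_inv_mul_sqrt_one_add_sq a).pow 2).congr_left fun θ => ?_
  rw [inv_pow, mul_pow, sq_sqrt (by positivity)]

theorem isBigO_div_mul_sqrt_one_add_sq {q : ℝ → ℝ} (hq : q =O[atTop] fun _ => (1 : ℝ)) (a : ℝ) :
    (fun θ => q θ / (a * √(1 + θ ^ 2))) =O[atTop] fun θ => θ⁻¹ := by
  simpa [div_eq_mul_inv] using hq.mul (isBigO_inv_mul_sqrt_one_add_sq a)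

section

variable {a : ℝ}

theorem isBigO_arcLength_deriv {f : ℝ → ℝ} (hf : f =O[atTop] fun θ => θ⁻¹) :
    (fun θ => f θ / (a * √(1 + θ ^ 2))) =O[atTop] fun θ => θ⁻¹ ^ 2 :=
  (hf.mul (isBigO_inv_mul_sqrt_one_add_sq a)).congr (fun θ => by ring) (fun θ => by ring)

theorem isBigO_arcLength_deriv2 {f f' : ℝ → ℝ} (hf : f =O[atTop] fun θ => θ⁻¹)
    (hf' : f' =O[atTop] fun θ => θ⁻¹) :
    (fun θ => f' θ / (a ^ 2 * (1 + θ ^ 2)) - θ * f θ / (a ^ 2 * (1 + θ ^ 2) ^ 2))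
      =O[atTop] fun θ => θ⁻¹ ^ 3 := by
  have h₁ := hf'.mul (isBigO_inv_mul_one_add_sq a)
  have h₂ := (hf.mul isBigO_div_one_add_sq).mul (isBigO_inv_mul_one_add_sq a)
  refine (h₁.sub (h₂.congr_right fun θ => by ring)).congr (fun θ => ?_) (fun θ => by ring)
  simp only [div_eq_mul_inv, mul_inv, ← inv_pow]
  ring

end

theorem hasDerivAt_sqrt_one_add_sq (θ : ℝ) :
    HasDerivAt (fun t => √(1 + t ^ 2)) (θ / √(1 + θ ^ 2)) θ := by
  have h := ((hasDerivAt_pow 2 θ).const_add 1).sqrt (by positivity)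
  convert h using 1
  field_simp
  ring

theorem HasDerivAt.div_mul_sqrt_one_add_sq {q : ℝ → ℝ} {q' a θ : ℝ} (hq : HasDerivAt q q' θ)
    (ha : a ≠ 0) :
    HasDerivAt (fun t => q t / (a * √(1 + t ^ 2)))
      ((q' - q θ * θ / (1 + θ ^ 2)) / (a * √(1 + θ ^ 2))) θ := by
  have hs : √(1 + θ ^ 2) ^ 2 = 1 + θ ^ 2 := sq_sqrt (by positivity)
  have hs0 : √(1 + θ ^ 2) ≠ 0 := by positivity
  refine (hq.div ((hasDerivAt_sqrt_one_add_sq θ).const_mul a) (by positivity)).congr_deriv ?_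
  field_simp
  rw [hs]

noncomputable def spiralCurvature (a θ : ℝ) : ℝ :=
  (2 + θ ^ 2) / (1 + θ ^ 2) / (a * √(1 + θ ^ 2))

noncomputable def spiralCurvatureDeriv (a θ : ℝ) : ℝ :=
  -(θ * (4 + θ ^ 2)) / (1 + θ ^ 2) ^ 2 / (a * √(1 + θ ^ 2))

noncomputable def spiralCurvatureDeriv2 (a θ : ℝ) : ℝ :=
  (2 * θ ^ 4 + 13 * θ ^ 2 - 4) / (1 + θ ^ 2) ^ 3 / (a * √(1 + θ ^ 2))

theorem spiralCurvature_eq (a θ : ℝ) :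
    (2 + θ ^ 2) / (a * (1 + θ ^ 2) ^ ((3 : ℝ) / 2)) = spiralCurvature a θ := by
  have h : (1 + θ ^ 2) ^ ((3 : ℝ) / 2) = (1 + θ ^ 2) * √(1 + θ ^ 2) := by
    rw [sqrt_eq_rpow, ← rpow_one_add' (by positivity) (by norm_num)]
    norm_num
  rw [spiralCurvature, h, div_div, mul_left_comm]

section

variable {a : ℝ}

theorem hasDerivAt_spiralCurvature (ha : a ≠ 0) (θ : ℝ) :
    HasDerivAt (spiralCurvature a) (spiralCurvatureDeriv a θ) θ := by
  have hq : HasDerivAt (fun t => (2 + t ^ 2) / (1 + t ^ 2)) (-2 * θ / (1 + θ ^ 2) ^ 2) θ := by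
    refine (((hasDerivAt_pow 2 θ).const_add 2).div ((hasDerivAt_pow 2 θ).const_add 1)
      (by positivity)).congr_deriv ?_
    field_simp
    ring
  refine (hq.div_mul_sqrt_one_add_sq ha).congr_deriv ?_
  rw [spiralCurvatureDeriv]
  congr 1
  field_simp
  ring

theorem hasDerivAt_spiralCurvatureDeriv (ha : a ≠ 0) (θ : ℝ) :
    HasDerivAt (spiralCurvatureDeriv a) (spiralCurvatureDeriv2 a θ) θ := by
  have hq : HasDerivAt (fun t => -(t * (4 + t ^ 2)) / (1 + t ^ 2) ^ 2)
      ((θ ^ 4 + 9 * θ ^ 2 - 4) / (1 + θ ^ 2) ^ 3) θ := by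
    refine (((hasDerivAt_id' θ).fun_mul ((hasDerivAt_pow 2 θ).const_add 4)).fun_neg.div
      (((hasDerivAt_pow 2 θ).const_add 1).fun_pow 2) (by positivity)).congr_deriv ?_
    field_simp
    ring
  refine (hq.div_mul_sqrt_one_add_sq ha).congr_deriv ?_
  rw [spiralCurvatureDeriv2]
  congr 1
  field_simp
  ring

theorem deriv_spiralCurvature (ha : a ≠ 0) : deriv (spiralCurvature a) = spiralCurvatureDeriv a :=
  funext fun θ => (hasDerivAt_spiralCurvature ha θ).deriv

theorem deriv_spiralCurvatureDeriv (ha : a ≠ 0) :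
    deriv (spiralCurvatureDeriv a) = spiralCurvatureDeriv2 a :=
  funext fun θ => (hasDerivAt_spiralCurvatureDeriv ha θ).deriv

theorem isBigO_spiralCurvature : spiralCurvature a =O[atTop] fun θ => θ⁻¹ := by
  refine isBigO_div_mul_sqrt_one_add_sq (isBigO_of_le' (l := atTop) (c := 2) fun θ => ?_) a
  rw [norm_div, norm_eq_abs, norm_eq_abs, abs_of_pos (by positivity : (0 : ℝ) < 1 + θ ^ 2),
    abs_of_pos (by positivity : (0 : ℝ) < 2 + θ ^ 2), norm_one, div_le_iff₀ (by positivity)]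
  nlinarith

theorem isBigO_spiralCurvatureDeriv : spiralCurvatureDeriv a =O[atTop] fun θ => θ⁻¹ := by
  refine isBigO_div_mul_sqrt_one_add_sq (isBigO_of_le' (l := atTop) (c := 4) fun θ => ?_) a
  rw [norm_div, norm_eq_abs, norm_eq_abs, abs_of_pos (by positivity : (0 : ℝ) < (1 + θ ^ 2) ^ 2),
    norm_one, div_le_iff₀ (by positivity), abs_neg, abs_mul,
    abs_of_pos (by positivity : (0 : ℝ) < 4 + θ ^ 2)]
  nlinarith [mul_le_mul_of_nonneg_right (abs_le_one_add_sq θ) (by positivity : (0 : ℝ) ≤ 4 + θ ^ 2)]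

theorem isBigO_spiralCurvatureDeriv2 : spiralCurvatureDeriv2 a =O[atTop] fun θ => θ⁻¹ := by
  refine isBigO_div_mul_sqrt_one_add_sq (isBigO_of_le' (l := atTop) (c := 13) fun θ => ?_) a
  rw [norm_div, norm_eq_abs, norm_eq_abs, abs_of_pos (by positivity : (0 : ℝ) < (1 + θ ^ 2) ^ 3),
    norm_one, div_le_iff₀ (by positivity), abs_le]
  constructor <;> nlinarith [sq_nonneg θ, pow_two_nonneg (θ ^ 2), pow_two_nonneg (θ ^ 3)]

theorem isBigO_spiralCurvature_sq_sub (ha : a ≠ 0) :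
    (fun θ => spiralCurvature a θ ^ 2 / 4 - 1 / (4 * a ^ 2 * θ ^ 2)) =O[atTop]
      fun θ => θ⁻¹ ^ 3 := by
  refine IsBigO.of_bound (1 / (4 * a ^ 2)) ?_
  filter_upwards [eventually_ge_atTop 1] with θ hθ
  have hθ0 : 0 < θ := by linarith
  have hexpand : spiralCurvature a θ ^ 2 / 4 - 1 / (4 * a ^ 2 * θ ^ 2)
      = (θ ^ 4 + θ ^ 2 - 1) / (4 * a ^ 2 * θ ^ 2 * (1 + θ ^ 2) ^ 3) := by
    rw [spiralCurvature, div_pow, div_pow, mul_pow, sq_sqrt (by positivity)]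
    field_simp
    ring
  rw [hexpand, norm_div, norm_eq_abs, norm_eq_abs, abs_of_nonneg (by nlinarith),
    abs_of_pos (by positivity), norm_pow, norm_inv, norm_eq_abs, abs_of_pos hθ0,
    div_le_iff₀ (by positivity)]
  field_simp
  nlinarith [pow_pos hθ0 3, pow_pos hθ0 4, pow_pos hθ0 5]

end

/-- With `γ θ = (2+θ²)/(a₀(1+θ²)^(3/2))`, the arc-length derivatives
`dγ/ds = γ'(θ)/(a₀√(1+θ²))`, `d²γ/ds² = γ''(θ)/(a₀²(1+θ²)) − θγ'(θ)/(a₀²(1+θ²)²)`,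
and `d` (expressed as a function `dd` of `θ`) bounded with `dd θ * γ θ → 0`, the
effective potential `W̃(s(θ))` satisfies `W̃(s(θ)) = 1/(4a₀²θ²) + O(θ⁻³)`. -/
theorem effective_potential_archimedean (a₀ : ℝ) (ha₀ : 0 < a₀)
    (γ dγds dγds2 dd Wt : ℝ → ℝ)
    (hγ : ∀ θ : ℝ, γ θ = (2 + θ ^ 2) / (a₀ * (1 + θ ^ 2) ^ ((3 : ℝ) / 2)))
    (hdγds : ∀ θ : ℝ, dγds θ = deriv γ θ / (a₀ * Real.sqrt (1 + θ ^ 2)))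
    (hdγds2 : ∀ θ : ℝ, dγds2 θ =
      deriv (deriv γ) θ / (a₀ ^ 2 * (1 + θ ^ 2))
        - θ * deriv γ θ / (a₀ ^ 2 * (1 + θ ^ 2) ^ 2))
    (hddb : ∃ M, ∀ θ : ℝ, |dd θ| ≤ M)
    (hddγ : Tendsto (fun θ : ℝ => dd θ * γ θ) atTop (nhds 0))
    (hWt : ∀ θ : ℝ, Wt θ =
      γ θ ^ 2 / (4 * (1 - γ θ * dd θ) ^ 2)
        + dd θ * |dγds2 θ| / (2 * (1 - γ θ * dd θ) ^ 3)
        + (5 / 4) * dd θ ^ 2 * |dγds θ| ^ 2 / (1 - dd θ * γ θ) ^ 4) :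
    (fun θ : ℝ => Wt θ - 1 / (4 * a₀ ^ 2 * θ ^ 2)) =O[atTop]
      (fun θ : ℝ => 1 / θ ^ 3) := by
  obtain rfl : γ = spiralCurvature a₀ := funext fun θ => (hγ θ).trans (spiralCurvature_eq a₀ θ)
  rw [deriv_spiralCurvature ha₀.ne'] at hdγds hdγds2
  rw [deriv_spiralCurvatureDeriv ha₀.ne'] at hdγds2
  obtain ⟨M, hM⟩ := hddb
  have hdd : dd =O[atTop] fun _ => (1 : ℝ) := isBigO_of_le' (c := M) _ fun θ => by simpa using hM θ
  have hD₁ : dγds =O[atTop] fun θ => θ⁻¹ ^ 2 :=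
    (isBigO_arcLength_deriv isBigO_spiralCurvatureDeriv).congr_left fun θ => (hdγds θ).symm
  have hD₂ : dγds2 =O[atTop] fun θ => θ⁻¹ ^ 3 :=
    (isBigO_arcLength_deriv2 isBigO_spiralCurvatureDeriv isBigO_spiralCurvatureDeriv2).congr_left
      fun θ => (hdγds2 θ).symm
  have hcorr := isBigO_effectivePotential_sub isBigO_spiralCurvature hdd hddγ hD₁ hD₂
    (tendsto_inv_atTop_zero.isBigO_one ℝ)
  refine (hcorr.add (isBigO_spiralCurvature_sq_sub ha₀.ne')).congr (fun θ => ?_) (fun θ => ?_)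
  · rw [hWt, effectivePotential]
    ring
  · rw [inv_pow, one_div]
end
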